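/- (Lemma 3) Let K, S, L be positive integers, and for each p ∈ {1,…,K} let B_p ∈ ℂ^{S×L} and d_p ∈ ℂ^S. Set P = Σ_p B_p† B_p (a Hermitian positive semidefinite matrix with largest eigenvalue λ_P), q = Σ_p B_p† d_p, and define f(x) = Σ_p ‖d_p − B_p x‖₂² for x ∈ ℂ^L. Let γ ∈ ℝ satisfy γ ≥ (L/8)·λ_P + ‖q‖₂, assume λ_P + γ > 0, and let the step size β satisfy 0 < β < 1/(λ_P + γ). Let x_0 ∈ S^L and define recursively x_{k+1} = R(x_k + β·P_{x_k}(−(2(P + γI)x_k − 2q))). Then every x_k lies in S^L, the sequence (f(x_k))_{k≥0} is non-increasing and nonnegative, and therefore (f(x_k))_{k≥0} converges to a finite limit f* ≥ 0. -/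

import Mathlib

open Matrix
open scoped ComplexOrder

/-- Projection onto the tangent space of the complex circle manifold at `z`:
`(P_z(w))_l = w_l − Re(conj(w_l)·z_l)·z_l`. -/
noncomputable def proj {L : ℕ} (z w : Fin L → ℂ) : Fin L → ℂ :=
  fun l => w l - ((((starRingEnd ℂ) (w l)) * z l).re : ℂ) * z l

/-- Retraction onto the complex circle manifold: `(R(w))_l = w_l / |w_l|`. -/
noncomputable def retr {L : ℕ} (w : Fin L → ℂ) : Fin L → ℂ :=
  fun l => w l / ((‖w l‖ : ℝ) : ℂ)

/-!
In the frame of `z ∈ S^L` the iteration multiplies `z_l` by the unit complex number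
`rotor (β t_l) = (1 - i β t_l) / √(1 + β² t_l²)`, where `t_l = 2 Im (conj z_l (P z - q)_l)`; so the
iterates stay on `S^L`. Up to a constant, `f x = Re (x†P x) - 2 Re (x†q)`. Bounding the quadratic
part of `f (z u) - f z` by `λ_P ‖u - 1‖²` splits the change into one scalar term per coordinate,
and each term is nonpositive as soon as `Re (conj z_l (P z - q)_l) ≥ -γ` and `β (λ_P + γ) < 1`.
The former follows from `Re (conj z_l (P z)_l) ≥ -(L/8) λ_P`, obtained by evaluating the quadratic
form at `z ± 2 z_l e_l`, together with `|q_l| ≤ ‖q‖₂`. A nonincreasing sequence bounded below by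
`0` converges.
-/

open scoped ComplexConjugate

namespace Matrix
variable {n 𝕜 : Type*} [Fintype n] [RCLike 𝕜] {A : Matrix n n 𝕜}

lemma IsHermitian.posSemidef_smul_one_sub [DecidableEq n] (hA : A.IsHermitian) {lam : ℝ}
    (hlam : ∀ i, hA.eigenvalues i ≤ lam) : ((lam : 𝕜) • 1 - A).PosSemidef := by
  conv => enter [1, 2]; rw [hA.spectral_theorem]
  rw [show ((lam : 𝕜) • 1 : Matrix n n 𝕜) =
      Unitary.conjStarAlgAut 𝕜 _ hA.eigenvectorUnitary ((lam : 𝕜) • 1) by simp, ← map_sub,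
    Unitary.conjStarAlgAut_apply, Unitary.isUnit_coe.posSemidef_star_right_conjugate_iff,
    smul_one_eq_diagonal, diagonal_sub, posSemidef_diagonal_iff]
  intro i
  rw [Function.comp_apply, ← RCLike.ofReal_sub, RCLike.ofReal_nonneg]
  exact sub_nonneg.mpr (hlam i)

lemma IsHermitian.re_dotProduct_mulVec_le [DecidableEq n] (hA : A.IsHermitian) {lam : ℝ}
    (hlam : ∀ i, hA.eigenvalues i ≤ lam) (x : n → 𝕜) :
    RCLike.re (star x ⬝ᵥ A *ᵥ x) ≤ lam * RCLike.re (star x ⬝ᵥ x) := by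
  have := (hA.posSemidef_smul_one_sub hlam).re_dotProduct_nonneg x
  rwa [sub_mulVec, smul_mulVec, one_mulVec, dotProduct_sub, dotProduct_smul, map_sub,
    smul_eq_mul, RCLike.re_ofReal_mul, sub_nonneg] at this

lemma re_star_dotProduct_self (v : n → 𝕜) : RCLike.re (star v ⬝ᵥ v) = ∑ j, ‖v j‖ ^ 2 := by
  simp only [dotProduct, Pi.star_apply, RCLike.star_def, RCLike.conj_mul, map_sum]
  norm_cast

lemma IsHermitian.re_dotProduct_mulVec_add (hA : A.IsHermitian) (x y : n → 𝕜) :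
    RCLike.re (star (x + y) ⬝ᵥ A *ᵥ (x + y)) = RCLike.re (star x ⬝ᵥ A *ᵥ x)
      + RCLike.re (star y ⬝ᵥ A *ᵥ y) + 2 * RCLike.re (star x ⬝ᵥ A *ᵥ y) := by
  have hsymm : star y ⬝ᵥ A *ᵥ x = star (star x ⬝ᵥ A *ᵥ y) := by
    rw [star_dotProduct, star_mulVec, ← dotProduct_mulVec, hA.eq]
  rw [star_add, mulVec_add, dotProduct_add, add_dotProduct, add_dotProduct, hsymm]
  simp only [map_add, RCLike.star_def, RCLike.conj_re]
  ring

lemma PosSemidef.neg_card_div_eight_mul_le_re_conj_mul_mulVec [DecidableEq n]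
    (hA : A.PosSemidef) {lam : ℝ} (hlam : ∀ i, hA.isHermitian.eigenvalues i ≤ lam)
    {z : n → 𝕜} (hz : ∀ j, ‖z j‖ = 1) (l : n) :
    -(Fintype.card n / 8 * lam) ≤ RCLike.re (conj (z l) * (A *ᵥ z) l) := by
  -- `z - a` still has unimodular entries, so the eigenvalue bound there costs only `card n * lam`.
  set a : n → 𝕜 := Pi.single l (2 * z l)
  have hcross : RCLike.re (star a ⬝ᵥ A *ᵥ z) = 2 * RCLike.re (conj (z l) * (A *ᵥ z) l) := by
    simp [a, single_dotProduct, mul_assoc]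
  have hplus := hA.re_dotProduct_nonneg (a + z)
  have hminus := hA.isHermitian.re_dotProduct_mulVec_le hlam (-a + z)
  have hnorm : RCLike.re (star (-a + z) ⬝ᵥ (-a + z)) = Fintype.card n := by
    have hnorm_one : ∀ j, ‖(-a + z) j‖ = 1 := by
      intro j
      rcases eq_or_ne j l with rfl | hj
      · simp only [a, Pi.add_apply, Pi.neg_apply, Pi.single_eq_same]
        rw [show -(2 * z j) + z j = -z j by ring, norm_neg, hz]
      · simp [a, hj, hz]
    rw [re_star_dotProduct_self, Finset.sum_congr rfl fun j _ => by rw [hnorm_one j]]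
    simp
  rw [hA.isHermitian.re_dotProduct_mulVec_add] at hplus hminus
  simp only [mulVec_neg, dotProduct_neg, star_neg, neg_dotProduct, neg_neg, map_neg, hnorm,
    hcross] at hplus hminus
  nlinarith

lemma sum_norm_sub_mulVec_sq {m : Type*} [Fintype m] (B : Matrix m n 𝕜) (d : m → 𝕜)
    (x : n → 𝕜) :
    ∑ s, ‖d s - (B *ᵥ x) s‖ ^ 2 = ∑ s, ‖d s‖ ^ 2 + RCLike.re (star x ⬝ᵥ (Bᴴ * B) *ᵥ x)
      - 2 * RCLike.re (star x ⬝ᵥ Bᴴ *ᵥ d) := by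
  have hcross : RCLike.re (star (B *ᵥ x) ⬝ᵥ d) = RCLike.re (star x ⬝ᵥ Bᴴ *ᵥ d) := by
    rw [star_mulVec, ← dotProduct_mulVec]
  have hcross' : RCLike.re (star d ⬝ᵥ B *ᵥ x) = RCLike.re (star x ⬝ᵥ Bᴴ *ᵥ d) := by
    rw [star_dotProduct, RCLike.star_def, RCLike.conj_re, hcross]
  have hBB : star (B *ᵥ x) ⬝ᵥ B *ᵥ x = star x ⬝ᵥ (Bᴴ * B) *ᵥ x := by
    rw [star_mulVec, ← dotProduct_mulVec, mulVec_mulVec]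
  simp_rw [← Pi.sub_apply d, ← re_star_dotProduct_self, star_sub, sub_dotProduct, dotProduct_sub,
    map_sub, hBB, hcross, hcross']
  ring

lemma sum_sum_norm_sub_mulVec_sq {ι m : Type*} [Fintype ι] [Fintype m]
    (B : ι → Matrix m n 𝕜) (d : ι → m → 𝕜) (x : n → 𝕜) :
    ∑ p, ∑ s, ‖d p s - (B p *ᵥ x) s‖ ^ 2 = ∑ p, ∑ s, ‖d p s‖ ^ 2
      + RCLike.re (star x ⬝ᵥ (∑ p, (B p)ᴴ * B p) *ᵥ x)
      - 2 * RCLike.re (star x ⬝ᵥ ∑ p, (B p)ᴴ *ᵥ d p) := by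
  simp only [sum_norm_sub_mulVec_sq, Finset.sum_sub_distrib, Finset.sum_add_distrib, sum_mulVec,
    dotProduct_sum, map_sum, Finset.mul_sum]

noncomputable def quadLoss (A : Matrix n n 𝕜) (q x : n → 𝕜) : ℝ :=
  RCLike.re (star x ⬝ᵥ A *ᵥ x) - 2 * RCLike.re (star x ⬝ᵥ q)

lemma IsHermitian.quadLoss_mul_le [DecidableEq n] (hA : A.IsHermitian) {lam : ℝ}
    (hlam : ∀ i, hA.eigenvalues i ≤ lam) (q : n → 𝕜) {z : n → 𝕜} (hz : ∀ l, ‖z l‖ = 1)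
    (u : n → 𝕜) :
    quadLoss A q (z * u) ≤ quadLoss A q z + ∑ l, (lam * ‖u l - 1‖ ^ 2
      + 2 * RCLike.re (conj (u l - 1) * (conj (z l) * (A *ᵥ z - q) l))) := by
  have hzu : z * u = z * (u - 1) + z := by ring
  set p := z * (u - 1)
  have hquad := hA.re_dotProduct_mulVec_le hlam p
  simp only [re_star_dotProduct_self, p, Pi.mul_apply, Pi.sub_apply, Pi.one_apply, norm_mul, hz,
    one_mul] at hquad
  have hlin : RCLike.re (star p ⬝ᵥ A *ᵥ z) - RCLike.re (star p ⬝ᵥ q)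
      = ∑ l, RCLike.re (conj (u l - 1) * (conj (z l) * (A *ᵥ z - q) l)) := by
    rw [← map_sub, ← dotProduct_sub, dotProduct, map_sum]
    refine Finset.sum_congr rfl fun l _ => ?_
    simp only [p, Pi.star_apply, Pi.mul_apply, Pi.sub_apply, Pi.one_apply, RCLike.star_def,
      map_mul, map_sub]
    ring_nf
  unfold quadLoss
  rw [hzu, hA.re_dotProduct_mulVec_add, star_add, add_dotProduct, map_add,
    Finset.sum_add_distrib, ← Finset.mul_sum, ← Finset.mul_sum, ← hlin]
  linarith

end Matrix

section

open Complex

noncomputable def rotor (s : ℝ) : ℂ := (1 - s * I) / (√(1 + s ^ 2) : ℝ)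

lemma norm_one_sub_mul_I (s : ℝ) : ‖1 - s * I‖ = √(1 + s ^ 2) := by
  simpa [sub_eq_add_neg] using norm_add_mul_I 1 (-s)

lemma norm_rotor (s : ℝ) : ‖rotor s‖ = 1 := by
  rw [rotor, norm_div, norm_one_sub_mul_I, norm_real, Real.norm_of_nonneg (Real.sqrt_nonneg _),
    div_self (by positivity : 0 < √(1 + s ^ 2)).ne']

lemma rotor_re (s : ℝ) : (rotor s).re = 1 / √(1 + s ^ 2) := by simp [rotor]

lemma rotor_im (s : ℝ) : (rotor s).im = -s / √(1 + s ^ 2) := by simp [rotor]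

lemma rotor_descent_term_nonpos {lam γ β : ℝ} (hβ : 0 < β) (hβlg : β * (lam + γ) < 1) {w : ℂ}
    (hw : -γ ≤ w.re) :
    lam * ‖rotor (2 * β * w.im) - 1‖ ^ 2 + 2 * (conj (rotor (2 * β * w.im) - 1) * w).re ≤ 0 := by
  set s := 2 * β * w.im
  set ρ := √(1 + s ^ 2)
  have hρ2 : ρ ^ 2 = 1 + s ^ 2 := Real.sq_sqrt (by positivity)
  have hρ1 : 1 ≤ ρ := Real.one_le_sqrt.mpr (by nlinarith)
  have hnorm : ‖rotor s - 1‖ ^ 2 = 2 * (1 - 1 / ρ) := by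
    rw [← normSq_eq_norm_sq, normSq_apply]
    simp only [sub_re, sub_im, one_re, one_im, rotor_re, rotor_im]
    field_simp
    nlinarith
  have hre : (conj (rotor s - 1) * w).re = (1 / ρ - 1) * w.re - s / ρ * w.im := by
    simp only [mul_re, conj_re, conj_im, sub_re, sub_im, one_re, one_im, rotor_re, rotor_im]
    ring
  have hβw : β * (lam - w.re) ≤ 1 := by nlinarith
  have hρs : 2 * (ρ - 1) ≤ s ^ 2 := by nlinarith
  have hscaled : β * (2 * (ρ - 1) * (lam - w.re) - 2 * s * w.im) ≤ 0 := by
    have : 2 * (ρ - 1) * (β * (lam - w.re)) ≤ 2 * (ρ - 1) := by nlinarith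
    nlinarith
  have hρ : lam * (2 * (1 - 1 / ρ)) + 2 * ((1 / ρ - 1) * w.re - s / ρ * w.im)
      = (2 * (ρ - 1) * (lam - w.re) - 2 * s * w.im) / ρ := by
    field_simp
    ring
  rw [hnorm, hre, hρ]
  exact div_nonpos_of_nonpos_of_nonneg (nonpos_of_mul_nonpos_right hscaled hβ) (by positivity)

lemma proj_apply_of_norm_eq_one {L : ℕ} {z : Fin L → ℂ} (w : Fin L → ℂ) {l : Fin L}
    (hz : ‖z l‖ = 1) : proj z w l = (conj (z l) * w l).im * I * z l := by
  have hzz : conj (z l) * z l = 1 := by simp [conj_mul', hz]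
  set a := conj (z l) * w l
  have hw : w l = z l * a := by rw [← mul_assoc, mul_comm (z l), hzz, one_mul]
  have hre : (conj (w l) * z l).re = a.re := by
    rw [hw, map_mul, mul_comm, ← mul_assoc, mul_comm (z l), hzz, one_mul, conj_re]
  rw [proj, hre, hw]
  nth_rewrite 1 [← re_add_im a]
  ring

lemma retr_add_smul_proj_neg_apply {L : ℕ} (β : ℝ) {z : Fin L → ℂ} (v : Fin L → ℂ) {l : Fin L}
    (hz : ‖z l‖ = 1) :
    retr (fun j => z j + β * proj z (-v) j) l = z l * rotor (β * (conj (z l) * v l).im) := by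
  have hstep : z l + β * proj z (-v) l = z l * (1 - ((β * (conj (z l) * v l).im : ℝ) : ℂ) * I) := by
    rw [proj_apply_of_norm_eq_one _ hz]
    simp only [Pi.neg_apply, mul_neg, neg_im]
    push_cast
    ring
  rw [retr, hstep, norm_mul, hz, one_mul, norm_one_sub_mul_I, rotor, mul_div_assoc]

lemma retr_gradient_step_eq_mul_rotor {L : ℕ} (A : Matrix (Fin L) (Fin L) ℂ) (q : Fin L → ℂ)
    (γ β : ℝ) {z : Fin L → ℂ} (hz : ∀ l, ‖z l‖ = 1) :
    retr (fun l => z l + β * proj z (-fun l' => 2 * ((A + (γ : ℂ) • 1) *ᵥ z) l' - 2 * q l') l)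
      = z * fun l => rotor (2 * β * (conj (z l) * (A *ᵥ z - q) l).im) := by
  funext l
  -- the shift `γ • 1` only adds the real number `2 γ |z_l|²` to `conj z_l * v_l`
  have him : (conj (z l) * (2 * ((A + (γ : ℂ) • 1) *ᵥ z) l - 2 * q l)).im
      = 2 * (conj (z l) * (A *ᵥ z - q) l).im := by
    simp only [add_mulVec, smul_mulVec, one_mulVec, Pi.add_apply, Pi.smul_apply, Pi.sub_apply,
      smul_eq_mul, mul_im, mul_re, sub_im, sub_re, add_im, add_re, conj_re, conj_im, ofReal_re,
      ofReal_im, re_ofNat, im_ofNat]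
    ring
  rw [retr_add_smul_proj_neg_apply β _ (hz l), Pi.mul_apply, him, mul_left_comm, ← mul_assoc]

lemma Matrix.PosSemidef.quadLoss_mul_rotor_le {n : Type*} [Fintype n] [DecidableEq n]
    {A : Matrix n n ℂ} (hA : A.PosSemidef) {lam γ β : ℝ}
    (hlam : ∀ i, hA.isHermitian.eigenvalues i ≤ lam) {q : n → ℂ}
    (hq : ∀ l, Fintype.card n / 8 * lam + ‖q l‖ ≤ γ) (hβ : 0 < β) (hβlg : β * (lam + γ) < 1)
    {z : n → ℂ} (hz : ∀ l, ‖z l‖ = 1) :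
    quadLoss A q (z * fun l => rotor (2 * β * (conj (z l) * (A *ᵥ z - q) l).im))
      ≤ quadLoss A q z := by
  refine (hA.isHermitian.quadLoss_mul_le hlam q hz _).trans
    (add_le_of_nonpos_right (Finset.sum_nonpos fun l _ => rotor_descent_term_nonpos hβ hβlg ?_))
  have hAz := RCLike.re_to_complex ▸ hA.neg_card_div_eight_mul_le_re_conj_mul_mulVec hlam hz l
  have hqz : (conj (z l) * q l).re ≤ ‖q l‖ := by
    simpa [norm_mul, hz l] using re_le_norm (conj (z l) * q l)
  simp only [Pi.sub_apply, mul_sub, sub_re]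
  linarith [hq l]

end

theorem stmt13_general (K S L : ℕ)
    (B : Fin K → Matrix (Fin S) (Fin L) ℂ) (d : Fin K → Fin S → ℂ)
    (P : Matrix (Fin L) (Fin L) ℂ) (hPdef : P = ∑ p, (B p)ᴴ * B p)
    (hP : P.PosSemidef)
    (lamP : ℝ)
    (hlamP_ub : ∀ i, hP.isHermitian.eigenvalues i ≤ lamP)
    (q : Fin L → ℂ) (hq : q = ∑ p, (B p)ᴴ.mulVec (d p))
    (f : (Fin L → ℂ) → ℝ)
    (hf : ∀ x, f x = ∑ p, ∑ s, ‖d p s - (B p).mulVec x s‖ ^ 2)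
    (γ : ℝ)
    (hγ : ((L : ℝ) / 8) * lamP + Real.sqrt (∑ l, ‖q l‖ ^ 2) ≤ γ)
    (hpos : 0 < lamP + γ)
    (β : ℝ) (hβ : 0 < β) (hβ' : β < 1 / (lamP + γ))
    (x : ℕ → Fin L → ℂ) (hx0 : ∀ l, ‖x 0 l‖ = 1)
    (hrec : ∀ k, x (k + 1) = retr (fun l =>
      x k l + (β : ℂ) * proj (x k)
        (-(fun l' =>
          2 * (P + (γ : ℂ) • (1 : Matrix (Fin L) (Fin L) ℂ)).mulVec (x k) l'
            - 2 * q l')) l)) :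
    (∀ k l, ‖x k l‖ = 1) ∧
    (∀ k, f (x (k + 1)) ≤ f (x k)) ∧
    (∀ k, 0 ≤ f (x k)) ∧
    ∃ fstar : ℝ, 0 ≤ fstar ∧
      Filter.Tendsto (fun k => f (x k)) Filter.atTop (nhds fstar) := by
  have hβlg : β * (lamP + γ) < 1 := by rwa [lt_div_iff₀ hpos] at hβ'
  have hqγ : ∀ l, (Fintype.card (Fin L) : ℝ) / 8 * lamP + ‖q l‖ ≤ γ := fun l => by
    rw [Fintype.card_fin]
    grw [← hγ, ← Real.le_sqrt_of_sq_le
      (Finset.single_le_sum (fun j _ => sq_nonneg ‖q j‖) (Finset.mem_univ l))]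
  have hfq : ∀ y, f y = ∑ p, ∑ s, ‖d p s‖ ^ 2 + quadLoss P q y := fun y => by
    rw [hf, sum_sum_norm_sub_mulVec_sq, ← hPdef, ← hq, quadLoss]
    ring
  have hstep : ∀ k, (∀ l, ‖x k l‖ = 1) →
      x (k + 1) = x k * fun l => rotor (2 * β * (conj (x k l) * (P *ᵥ x k - q) l).im) :=
    fun k hk => (hrec k).trans (retr_gradient_step_eq_mul_rotor P q γ β hk)
  have hunit : ∀ k l, ‖x k l‖ = 1 := by
    intro k
    induction k with
    | zero => exact hx0
    | succ k ih => simp [hstep k ih, norm_rotor, ih]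
  have hdec : ∀ k, f (x (k + 1)) ≤ f (x k) := fun k => by
    rw [hfq, hfq, hstep k (hunit k)]
    gcongr
    exact hP.quadLoss_mul_rotor_le hlamP_ub hqγ hβ hβlg (hunit k)
  have hnonneg : ∀ k, 0 ≤ f (x k) := fun k => by
    rw [hf]
    positivity
  exact ⟨hunit, hdec, hnonneg, ⨅ k, f (x k), le_ciInf hnonneg,
    tendsto_atTop_ciInf (antitone_nat_of_succ_le hdec) ⟨0, Set.forall_mem_range.mpr hnonneg⟩⟩

/-- Lemma 3: With `P = Σ_p B_p† B_p` (Hermitian PSD, largest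
eigenvalue `lamP`), `q = Σ_p B_p† d_p`, `f(x) = Σ_p ‖d_p − B_p x‖₂²`,
`γ ≥ (L/8)·lamP + ‖q‖₂`, `lamP + γ > 0`, `0 < β < 1/(lamP + γ)`, and the PDR iterates
`x_{k+1} = R(x_k + β·P_{x_k}(−(2(P+γI)x_k − 2q)))` started from `x_0 ∈ S^L`:
every `x_k ∈ S^L`, `(f(x_k))` is non-increasing and nonnegative, and converges
to a finite limit `f* ≥ 0`. -/
theorem stmt13 (K S L : ℕ) (hK : 0 < K) (hS : 0 < S) (hL : 0 < L)
    (B : Fin K → Matrix (Fin S) (Fin L) ℂ) (d : Fin K → Fin S → ℂ)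
    (P : Matrix (Fin L) (Fin L) ℂ) (hPdef : P = ∑ p, (B p)ᴴ * B p)
    (hP : P.PosSemidef)
    (lamP : ℝ) (hlamP_mem : ∃ i, hP.isHermitian.eigenvalues i = lamP)
    (hlamP_ub : ∀ i, hP.isHermitian.eigenvalues i ≤ lamP)
    (q : Fin L → ℂ) (hq : q = ∑ p, (B p)ᴴ.mulVec (d p))
    (f : (Fin L → ℂ) → ℝ)
    (hf : ∀ x, f x = ∑ p, ∑ s, ‖d p s - (B p).mulVec x s‖ ^ 2)
    (γ : ℝ)
    (hγ : ((L : ℝ) / 8) * lamP + Real.sqrt (∑ l, ‖q l‖ ^ 2) ≤ γ)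
    (hpos : 0 < lamP + γ)
    (β : ℝ) (hβ : 0 < β) (hβ' : β < 1 / (lamP + γ))
    (x : ℕ → Fin L → ℂ) (hx0 : ∀ l, ‖x 0 l‖ = 1)
    (hrec : ∀ k, x (k + 1) = retr (fun l =>
      x k l + (β : ℂ) * proj (x k)
        (-(fun l' =>
          2 * (P + (γ : ℂ) • (1 : Matrix (Fin L) (Fin L) ℂ)).mulVec (x k) l'
            - 2 * q l')) l)) :
    (∀ k l, ‖x k l‖ = 1) ∧
    (∀ k, f (x (k + 1)) ≤ f (x k)) ∧
    (∀ k, 0 ≤ f (x k)) ∧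
    ∃ fstar : ℝ, 0 ≤ fstar ∧
      Filter.Tendsto (fun k => f (x k)) Filter.atTop (nhds fstar) :=
  stmt13_general K S L B d P hPdef hP lamP hlamP_ub q hq f hf γ hγ hpos β hβ hβ' x hx0 hrec
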